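/- arXiv:1203.5548 — 4 statements merged into one kernel-verified Lean document; each statement's English description precedes it below -/
import Mathlib

section
/- Let f = Σ_α a_α X_α be an n-symbol, let (b_α) be the associated weight family, and let W_1^f, …, W_n^f be the associated weighted shifts on ℓ²(𝔽₊ⁿ). Then the tuple (W_1^f, …, W_n^f) belongs to the noncommutative domain D_f(F(ℂⁿ)); that is, Σ_α a_α W_α^f (W_α^f)* ≤ 1 in the Löwner order on bounded operators on ℓ²(𝔽₊ⁿ). -/
/-!
The weighted shifts satisfy `W_α (W_α)* e_γ = (b_{γ/α} / b_γ) e_γ` when `α` is a prefix of `γ`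
(with `γ = α γ/α`) and `W_α (W_α)* e_γ = 0` otherwise. Splitting a factorization of `γ ≠ ∅` at its
first factor gives `b_γ = Σ_{α ≤ γ} a_α b_{γ/α}`, so `Σ_α a_α W_α (W_α)*` is diagonal with entry `1`
at every `e_γ` with `γ ≠ ∅` and `0` at `e_∅`. Hence `1 - Σ_α a_α W_α (W_α)*` is the rank-one
projection onto `e_∅`, which is positive.
-/

/-- Words over the alphabet `{1,…,n}`: the free monoid `𝔽₊ⁿ` (empty word `[]`,
concatenation `++`, word length `List.length`). -/
abbrev Word (n : ℕ) := List (Fin n)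

/-- An `n`-symbol: a finitely supported family of real coefficients indexed by words,
vanishing at the empty word, nonnegative everywhere, and strictly positive at
single-letter words. -/
structure NSymbol (n : ℕ) where
  a : Word n → ℝ
  finiteSupport : (Function.support a).Finite
  map_empty : a [] = 0
  nonneg : ∀ α : Word n, 0 ≤ a α
  pos_single : ∀ j : Fin n, 0 < a [j]

/-- The weight family `(b_α)` of an `n`-symbol: `b_∅ = 1` and, for a nonempty word `α`,
`b_α = Σ_{k=1}^{|α|} Σ_{α = γ₁⋯γ_k, γᵢ ≠ ∅} a_{γ₁}⋯a_{γ_k}`, i.e. the sum of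
`a_{γ₁}⋯a_{γ_k}` over all factorizations of `α` into at least one nonempty word. -/
noncomputable def weight {n : ℕ} (f : NSymbol n) (α : Word n) : ℝ :=
  if α = [] then 1
  else ∑ᶠ L ∈ {L : List (Word n) |
      L.flatten = α ∧ 1 ≤ L.length ∧ ∀ γ ∈ L, γ ≠ ([] : Word n)},
    (L.map f.a).prod

/-- The full Fock space `F(ℂⁿ)`, identified with `ℓ²(𝔽₊ⁿ)`. -/
noncomputable abbrev Fock (n : ℕ) := lp (fun _ : Word n => ℂ) 2

/-- The canonical orthonormal basis vector `e_α` of `ℓ²(𝔽₊ⁿ)`. -/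
noncomputable def e {n : ℕ} (α : Word n) : Fock n := lp.single 2 α 1

/-- `T_α = T_{i₁}⋯T_{i_k}` for a word `α = i₁⋯i_k`, with `T_∅ = 1`. -/
noncomputable def opWord {n : ℕ} {H : Type*} [NormedAddCommGroup H] [NormedSpace ℂ H]
    (T : Fin n → H →L[ℂ] H) (α : Word n) : H →L[ℂ] H :=
  (α.map T).prod

/-- Membership in the noncommutative domain `D_f(H)`:
`Σ_α a_α T_α T_α* ≤ 1_H` in the Löwner order on `B(H)`. -/
def memDomain {n : ℕ} (f : NSymbol n) {H : Type*} [NormedAddCommGroup H]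
    [InnerProductSpace ℂ H] [CompleteSpace H] (T : Fin n → H →L[ℂ] H) : Prop :=
  (∑ᶠ α : Word n, f.a α • (opWord T α * ContinuousLinearMap.adjoint (opWord T α))) ≤ 1

open scoped ComplexConjugate

namespace List

variable {α : Type*}

/-- Unlike in `weight`, the empty list of factors is allowed, so `[]` has exactly one
factorization, namely `[]`. -/
def factorizations (l : List α) : Set (List (List α)) :=
  {L | L.flatten = l ∧ ∀ p ∈ L, p ≠ []}

theorem factorizations_nil : factorizations ([] : List α) = {[]} := by
  ext L
  refine ⟨fun ⟨hflat, hne⟩ => ?_, fun hL => ?_⟩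
  · exact eq_nil_iff_forall_not_mem.2 fun p hp => hne p hp (flatten_eq_nil_iff.1 hflat p hp)
  · rw [Set.mem_singleton_iff.1 hL]
    simp [factorizations]

theorem finite_setOf_isPrefix (l : List α) : {p | p <+: l}.Finite :=
  l.inits.finite_toSet.subset fun p hp => (mem_inits p l).2 hp

theorem factorizations_eq_biUnion {l : List α} (hl : l ≠ []) :
    factorizations l =
      ⋃ p ∈ {p | p ≠ [] ∧ p <+: l}, (p :: ·) '' factorizations (l.drop p.length) := by
  ext L
  simp only [factorizations, Set.mem_iUnion, Set.mem_image, Set.mem_ofPred_eq, exists_prop]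
  constructor
  · rintro ⟨hflat, hne⟩
    cases L with
    | nil => exact absurd hflat.symm hl
    | cons p M =>
      rw [flatten_cons] at hflat
      refine ⟨p, ⟨hne p mem_cons_self, M.flatten, hflat⟩, M, ⟨?_, ?_⟩, rfl⟩
      · rw [← hflat, drop_left]
      · exact fun q hq => hne q (mem_cons_of_mem p hq)
  · rintro ⟨p, ⟨hp, hpre⟩, M, ⟨hflat, hne⟩, rfl⟩
    exact ⟨by rw [flatten_cons, hflat]; exact prefix_iff_eq_append.1 hpre,
      forall_mem_cons.2 ⟨hp, hne⟩⟩

theorem finite_factorizations : ∀ l : List α, (factorizations l).Finite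
  | [] => by simp [factorizations_nil]
  | a :: l => by
    rw [factorizations_eq_biUnion (cons_ne_nil a l)]
    exact ((finite_setOf_isPrefix _).subset fun p hp => hp.2).biUnion
      fun p hp => (finite_factorizations _).image _
termination_by l => l.length
decreasing_by
  have : 0 < p.length := length_pos_iff.2 hp.1
  simp only [length_drop, length_cons]
  omega

end List

section Weight

variable {n : ℕ} (f : NSymbol n)

theorem weight_eq_finsum_factorizations (γ : Word n) :
    weight f γ = ∑ᶠ L ∈ γ.factorizations, (L.map f.a).prod := by
  by_cases hγ : γ = []
  · simp [weight, hγ, List.factorizations_nil]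
  rw [weight, if_neg hγ]
  congr! 3 with L
  simp only [List.factorizations, Set.mem_ofPred_eq]
  refine ⟨fun ⟨hflat, _, hne⟩ => ⟨hflat, hne⟩, fun ⟨hflat, hne⟩ => ⟨hflat, ?_, hne⟩⟩
  rcases L with _ | ⟨p, M⟩
  · exact absurd hflat.symm hγ
  · simp

theorem weight_nonneg (γ : Word n) : 0 ≤ weight f γ := by
  rw [weight_eq_finsum_factorizations]
  exact finsum_nonneg fun L => finsum_nonneg fun _ =>
    List.prod_nonneg fun x hx => by
      obtain ⟨p, -, rfl⟩ := List.mem_map.1 hx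
      exact f.nonneg p

/-- Split each factorization at its first factor; the empty prefix contributes `a_∅ = 0`. -/
theorem weight_eq_finsum_isPrefix {γ : Word n} (hγ : γ ≠ []) :
    weight f γ = ∑ᶠ α ∈ {α | α <+: γ}, f.a α * weight f (γ.drop α.length) := by
  have hfin : {α : Word n | α ≠ [] ∧ α <+: γ}.Finite :=
    (List.finite_setOf_isPrefix γ).subset fun α hα => hα.2
  have hdisj : {α : Word n | α ≠ [] ∧ α <+: γ}.PairwiseDisjoint
      fun α => (α :: ·) '' (γ.drop α.length).factorizations := by
    rintro α - β - hαβ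
    refine Set.disjoint_left.2 ?_
    rintro _ ⟨M, -, rfl⟩ ⟨M', -, h⟩
    exact hαβ (List.cons.inj h).1.symm
  have hprefix : {α : Word n | α <+: γ} = insert [] {α | α ≠ [] ∧ α <+: γ} := by
    ext α
    by_cases hα : α = [] <;> simp [hα]
  rw [weight_eq_finsum_factorizations, List.factorizations_eq_biUnion hγ,
    finsum_mem_biUnion hdisj hfin fun α _ => (List.finite_factorizations _).image _, hprefix,
    finsum_mem_insert _ (fun h => h.1 rfl) hfin, f.map_empty, zero_mul, zero_add]
  refine finsum_mem_congr rfl fun α _ => ?_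
  rw [finsum_mem_image List.cons_injective.injOn, weight_eq_finsum_factorizations,
    mul_finsum_mem]
  simp only [List.map_cons, List.prod_cons]

theorem weight_pos : ∀ γ : Word n, 0 < weight f γ
  | [] => by simp [weight]
  | j :: t => by
    rw [weight_eq_finsum_isPrefix f (List.cons_ne_nil j t),
      finsum_mem_eq_finite_toFinset_sum _ (List.finite_setOf_isPrefix _)]
    refine Finset.sum_pos' (fun α _ => mul_nonneg (f.nonneg α) (weight_nonneg f _)) ⟨[j], ?_, ?_⟩
    · simp
    · simpa using mul_pos (f.pos_single j) (weight_pos t)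

theorem finsum_mul_weight_div (γ : Word n) :
    ∑ᶠ α, f.a α * (if α <+: γ then weight f (γ.drop α.length) / weight f γ else 0) =
      if γ = [] then 0 else 1 := by
  by_cases hγ : γ = []
  · subst hγ
    rw [if_pos rfl]
    refine finsum_eq_zero_of_forall_eq_zero fun α => ?_
    by_cases hα : α = []
    · rw [hα, f.map_empty, zero_mul]
    · rw [if_neg (fun h => hα (List.prefix_nil.1 h)), mul_zero]
  calc ∑ᶠ α, f.a α * (if α <+: γ then weight f (γ.drop α.length) / weight f γ else 0)
      = (∑ᶠ α ∈ {α | α <+: γ}, f.a α * weight f (γ.drop α.length)) / weight f γ := by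
        rw [finsum_mem_def, div_eq_mul_inv, finsum_mul]
        refine finsum_congr fun α => ?_
        by_cases hα : α <+: γ
        · rw [if_pos hα, Set.indicator_of_mem (s := {α | α <+: γ}) hα]
          ring
        · rw [if_neg hα, Set.indicator_of_notMem (s := {α | α <+: γ}) hα]
          ring
    _ = if γ = [] then 0 else 1 := by
        rw [← weight_eq_finsum_isPrefix f hγ, div_self (weight_pos f γ).ne', if_neg hγ]

end Weight

section WeightedShift

variable {ι 𝕜 : Type*} [RCLike 𝕜] [DecidableEq ι]

theorem lp.ext_single_one {F : Type*} [AddCommMonoid F] [Module 𝕜 F] [TopologicalSpace F]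
    [T2Space F] {T U : lp (fun _ : ι => 𝕜) 2 →L[𝕜] F}
    (h : ∀ i, T (lp.single 2 i 1) = U (lp.single 2 i 1)) : T = U :=
  lp.ext_continuousLinearMap ENNReal.ofNat_ne_top fun i => ContinuousLinearMap.ext_ring (h i)

variable (T : lp (fun _ : ι => 𝕜) 2 →L[𝕜] lp (fun _ : ι => 𝕜) 2) {σ : ι → ι} {c : ι → 𝕜}

theorem lp.adjoint_apply_of_apply_single
    (hT : ∀ i, T (lp.single 2 i 1) = c i • lp.single 2 (σ i) 1)
    (x : lp (fun _ : ι => 𝕜) 2) (i : ι) :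
    ContinuousLinearMap.adjoint T x i = conj (c i) * x (σ i) := by
  calc ContinuousLinearMap.adjoint T x i
      = inner 𝕜 (lp.single 2 i (1 : 𝕜)) (ContinuousLinearMap.adjoint T x) := by
        simp [lp.inner_single_left]
    _ = inner 𝕜 (T (lp.single 2 i 1)) x := ContinuousLinearMap.adjoint_inner_right _ _ _
    _ = conj (c i) * x (σ i) := by simp [hT, inner_smul_left, lp.inner_single_left]

theorem lp.adjoint_single_of_apply_single (hσ : σ.Injective)
    (hT : ∀ i, T (lp.single 2 i 1) = c i • lp.single 2 (σ i) 1) (i : ι) :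
    ContinuousLinearMap.adjoint T (lp.single 2 (σ i) 1) = conj (c i) • lp.single 2 i 1 := by
  ext k
  rw [lp.adjoint_apply_of_apply_single T hT, lp.coeFn_smul, Pi.smul_apply, lp.single_apply,
    lp.single_apply]
  by_cases hk : k = i
  · simp [hk]
  · simp [hk, hσ.ne hk]

theorem lp.adjoint_single_eq_zero_of_apply_single
    (hT : ∀ i, T (lp.single 2 i 1) = c i • lp.single 2 (σ i) 1) {j : ι}
    (hj : j ∉ Set.range σ) : ContinuousLinearMap.adjoint T (lp.single 2 j 1) = 0 := by
  ext k
  rw [lp.adjoint_apply_of_apply_single T hT, lp.single_apply,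
    Pi.single_eq_of_ne (fun h => hj ⟨k, h⟩)]
  simp

end WeightedShift

section Fock

variable {n : ℕ}

/-- The `ℝ`-action in the hypothesis on the shifts is the coordinatewise one of `lp`, not the
restriction of the `ℂ`-action; the two agree. -/
theorem ofReal_smul_fock (r : ℝ) (x : Fock n) : (r : ℂ) • x = r • x :=
  Complex.coe_smul r x

variable {f : NSymbol n} {W : Fin n → Fock n →L[ℂ] Fock n}
  (hW : ∀ (j : Fin n) (α : Word n),
    W j (e α) = Real.sqrt (weight f α / weight f (j :: α)) • e (j :: α))
include hW

theorem opWord_apply_e (α β : Word n) :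
    opWord W α (e β) = (Real.sqrt (weight f β / weight f (α ++ β)) : ℂ) • e (α ++ β) := by
  induction α with
  | nil => simp [opWord, div_self (weight_pos f β).ne']
  | cons j α ih =>
    have hsqrt : Real.sqrt (weight f β / weight f (α ++ β)) *
        Real.sqrt (weight f (α ++ β) / weight f (j :: (α ++ β))) =
          Real.sqrt (weight f β / weight f (j :: (α ++ β))) := by
      rw [← Real.sqrt_mul (div_nonneg (weight_nonneg f _) (weight_nonneg f _)),
        div_mul_div_cancel₀ (weight_pos f _).ne']
    rw [opWord, List.map_cons, List.prod_cons, ← opWord, mul_apply_eq_comp, ih, map_smul, hW,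
      List.cons_append, ← hsqrt, Complex.ofReal_mul, mul_smul]
    simp only [ofReal_smul_fock]

theorem opWord_apply_adjoint_e (α γ : Word n) :
    opWord W α (ContinuousLinearMap.adjoint (opWord W α) (e γ)) =
      (if α <+: γ then weight f (γ.drop α.length) / weight f γ else 0) • e γ := by
  have hshift := opWord_apply_e hW α
  by_cases hαγ : α <+: γ
  · obtain ⟨δ, rfl⟩ := hαγ
    rw [if_pos (List.prefix_append α δ), List.drop_left, e,
      lp.adjoint_single_of_apply_single _ (List.append_right_injective α) hshift, map_smul,
      ← e, hshift, smul_smul, Complex.conj_ofReal, ← Complex.ofReal_mul,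
      Real.mul_self_sqrt (div_nonneg (weight_nonneg f _) (weight_nonneg f _)),
      ofReal_smul_fock, e]
  · rw [if_neg hαγ, zero_smul, e, lp.adjoint_single_eq_zero_of_apply_single _ hshift hαγ,
      map_zero]

theorem finsum_smul_opWord_mul_adjoint :
    ∑ᶠ α, f.a α • (opWord W α * ContinuousLinearMap.adjoint (opWord W α)) =
      1 - InnerProductSpace.rankOne ℂ (e []) (e []) := by
  refine lp.ext_single_one fun γ => ?_
  have hfin : (Function.support fun α =>
      f.a α • (opWord W α * ContinuousLinearMap.adjoint (opWord W α))).Finite :=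
    f.finiteSupport.subset fun α hα h0 => hα (by simp only [h0, zero_smul])
  calc (∑ᶠ α, f.a α • (opWord W α * ContinuousLinearMap.adjoint (opWord W α))) (e γ)
      = ∑ᶠ α, f.a α • opWord W α (ContinuousLinearMap.adjoint (opWord W α) (e γ)) :=
        map_finsum (ContinuousLinearMap.apply ℂ _ (e γ)) hfin
    _ = ∑ᶠ α, (f.a α * if α <+: γ then weight f (γ.drop α.length) / weight f γ else 0) • e γ := by
        simp only [opWord_apply_adjoint_e hW, smul_smul]
    _ = (if γ = [] then 0 else 1 : ℝ) • e γ := by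
        rw [← finsum_smul, finsum_mul_weight_div]
    _ = (1 - InnerProductSpace.rankOne ℂ (e []) (e [])) (e γ) := by
        rcases γ with _ | ⟨j, t⟩ <;> simp [e, lp.inner_single_left]

end Fock

theorem stmt0_general {n : ℕ} (f : NSymbol n)
    (W : Fin n → Fock n →L[ℂ] Fock n)
    (hW : ∀ (j : Fin n) (α : Word n),
      W j (e α) = Real.sqrt (weight f α / weight f (j :: α)) • e (j :: α)) :
    memDomain f W := by
  rw [memDomain, ContinuousLinearMap.le_def]
  -- `memDomain` reaches the instances on `Fock n` by other (defeq) paths, so no `rw` here.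
  convert InnerProductSpace.isPositive_rankOne_self (𝕜 := ℂ) (e ([] : Word n)) using 1
  exact sub_eq_of_eq_add' (eq_sub_iff_add_eq.1 (finsum_smul_opWord_mul_adjoint hW)).symm

/-- the weighted shifts `(W_1^f,…,W_n^f)` associated to an `n`-symbol `f`
belong to the noncommutative domain `D_f(F(ℂⁿ))`:
`Σ_α a_α W_α^f (W_α^f)* ≤ 1` in the Löwner order on `B(ℓ²(𝔽₊ⁿ))`. -/
theorem stmt0 {n : ℕ} (hn : 1 ≤ n) (f : NSymbol n)
    (W : Fin n → Fock n →L[ℂ] Fock n)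
    (hW : ∀ (j : Fin n) (α : Word n),
      W j (e α) = Real.sqrt (weight f α / weight f (j :: α)) • e (j :: α)) :
    memDomain f W :=
  stmt0_general f W hW
end

section
/- Let n ≥ 1, let ω ∈ ℂⁿ with 0 < ‖ω‖ < 1, and let z ∈ ℂⁿ with z ≠ ω. Then ‖ψ_ω(z)‖² = 1 + (1 − ‖ω‖²)(1 − ‖z‖²)/‖ω − z‖². -/
/-! Expanding the square, `‖ω + t • (ω - z)‖²` is a quadratic polynomial in the real parameter `t`
whose coefficients involve only `‖ω‖`, `‖z‖` and `‖ω - z‖`. For `t = (1 - ‖ω‖²) / ‖ω - z‖²` the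
quadratic term `t² ‖ω - z‖²` equals `t (1 - ‖ω‖²)`, and everything collapses to `1 + t (1 - ‖z‖²)`. -/

/-- `ψ_ω(z) = ω + (1 − ‖ω‖²)(ω − z)/‖ω − z‖²` on `ℂⁿ` (meaningful for `z ≠ ω`). -/
noncomputable def psi {n : ℕ} (ω z : EuclideanSpace ℂ (Fin n)) : EuclideanSpace ℂ (Fin n) :=
  ω + ((1 - ‖ω‖ ^ 2) / ‖ω - z‖ ^ 2) • (ω - z)

/-- `φ_ω(z) = ψ_ω(z)/‖ψ_ω(z)‖²` (meaningful whenever `ψ_ω(z) ≠ 0`). -/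
noncomputable def phi {n : ℕ} (ω z : EuclideanSpace ℂ (Fin n)) : EuclideanSpace ℂ (Fin n) :=
  (‖psi ω z‖ ^ 2)⁻¹ • psi ω z

section

variable {E : Type*} [NormedAddCommGroup E] [InnerProductSpace ℝ E]

theorem norm_add_smul_sub_sq (x y : E) (t : ℝ) :
    ‖x + t • (x - y)‖ ^ 2 = ‖x‖ ^ 2 + t * (‖x‖ ^ 2 - ‖y‖ ^ 2) + t * (1 + t) * ‖x - y‖ ^ 2 := by
  have hxy := norm_sub_sq_real x y
  rw [norm_add_sq_real, inner_smul_right, inner_sub_right, real_inner_self_eq_norm_sq,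
    norm_smul, mul_pow, Real.norm_eq_abs, sq_abs]
  linear_combination (-t) * hxy

theorem norm_add_div_smul_sub_sq {x y : E} (hxy : x ≠ y) :
    ‖x + ((1 - ‖x‖ ^ 2) / ‖x - y‖ ^ 2) • (x - y)‖ ^ 2
      = 1 + (1 - ‖x‖ ^ 2) * (1 - ‖y‖ ^ 2) / ‖x - y‖ ^ 2 := by
  have hd : ‖x - y‖ ≠ 0 := by simpa [sub_eq_zero] using hxy
  rw [norm_add_smul_sub_sq]
  field_simp
  ring

end

theorem stmt12_general {n : ℕ} (ω : EuclideanSpace ℂ (Fin n))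
    (z : EuclideanSpace ℂ (Fin n)) (hz : z ≠ ω) :
    ‖psi ω z‖ ^ 2 = 1 + (1 - ‖ω‖ ^ 2) * (1 - ‖z‖ ^ 2) / ‖ω - z‖ ^ 2 :=
  norm_add_div_smul_sub_sq hz.symm

/-- `‖ψ_ω(z)‖² = 1 + (1 − ‖ω‖²)(1 − ‖z‖²)/‖ω − z‖²` for `z ≠ ω`. -/
theorem stmt12 {n : ℕ} (hn : 1 ≤ n) (ω : EuclideanSpace ℂ (Fin n))
    (hω0 : 0 < ‖ω‖) (hω1 : ‖ω‖ < 1)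
    (z : EuclideanSpace ℂ (Fin n)) (hz : z ≠ ω) :
    ‖psi ω z‖ ^ 2 = 1 + (1 - ‖ω‖ ^ 2) * (1 - ‖z‖ ^ 2) / ‖ω - z‖ ^ 2 :=
  stmt12_general ω z hz
end

section
/- Let n ≥ 1 and let ω ∈ ℂⁿ with 0 < ‖ω‖ < 1. For every z ∈ ℂⁿ with z ≠ ω: (i) if ‖z‖ < 1 then ‖ψ_ω(z)‖ > 1, so φ_ω(z) is well defined and ‖φ_ω(z)‖ < 1; (ii) if ‖z‖ = 1 then ‖ψ_ω(z)‖ = 1 and ‖φ_ω(z)‖ = 1. In particular φ_ω maps the open unit ball of ℂⁿ minus {ω} into the open unit ball and the unit sphere into the unit sphere. -/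
/-!
Expanding the square and eliminating `⟪ω, ω - z⟫` through `‖z‖² = ‖ω - (ω - z)‖²` gives
`‖ψ_ω(z)‖² = 1 + (1 - ‖ω‖²)(1 - ‖z‖²)/‖ω - z‖²`, so `‖ψ_ω(z)‖` is `> 1` inside the ball and `= 1`
on the sphere. Since `‖φ_ω(z)‖ = ‖ψ_ω(z)‖⁻¹`, the claims on `φ_ω` follow.
-/

theorem norm_add_smul_sub_sq_s13 {E : Type*} [NormedAddCommGroup E] [InnerProductSpace ℝ E]
    (ω z : E) (hz : z ≠ ω) :
    ‖ω + ((1 - ‖ω‖ ^ 2) / ‖ω - z‖ ^ 2) • (ω - z)‖ ^ 2 =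
      1 + (1 - ‖ω‖ ^ 2) * (1 - ‖z‖ ^ 2) / ‖ω - z‖ ^ 2 := by
  have hd : ‖ω - z‖ ≠ 0 := norm_ne_zero_iff.mpr (sub_ne_zero.mpr hz.symm)
  have hz_sq : ‖z‖ ^ 2 = ‖ω‖ ^ 2 - 2 * inner ℝ ω (ω - z) + ‖ω - z‖ ^ 2 := by
    rw [← norm_sub_sq_real, sub_sub_cancel]
  rw [norm_add_sq_real, inner_smul_right, norm_smul, mul_pow, Real.norm_eq_abs, sq_abs, hz_sq]
  field_simp
  ring

theorem norm_inv_norm_sq_smul {E : Type*} [NormedAddCommGroup E] [NormedSpace ℝ E] (v : E) :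
    ‖(‖v‖ ^ 2)⁻¹ • v‖ = ‖v‖⁻¹ := by
  rcases eq_or_ne ‖v‖ 0 with hv | hv
  · simp [hv]
  · rw [norm_smul, norm_inv, norm_pow, norm_norm]
    field_simp

section

variable {n : ℕ} {ω z : EuclideanSpace ℂ (Fin n)}

theorem norm_psi_sq (hz : z ≠ ω) :
    ‖psi ω z‖ ^ 2 = 1 + (1 - ‖ω‖ ^ 2) * (1 - ‖z‖ ^ 2) / ‖ω - z‖ ^ 2 :=
  norm_add_smul_sub_sq_s13 ω z hz

theorem norm_phi : ‖phi ω z‖ = ‖psi ω z‖⁻¹ :=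
  norm_inv_norm_sq_smul (psi ω z)

theorem one_lt_norm_psi (hω : ‖ω‖ < 1) (hz : z ≠ ω) (hz1 : ‖z‖ < 1) : 1 < ‖psi ω z‖ := by
  have hd : 0 < ‖ω - z‖ := norm_pos_iff.mpr (sub_ne_zero.mpr hz.symm)
  have hω2 : 0 < 1 - ‖ω‖ ^ 2 := by nlinarith [norm_nonneg ω]
  have hz2 : 0 < 1 - ‖z‖ ^ 2 := by nlinarith [norm_nonneg z]
  have : 1 < ‖psi ω z‖ ^ 2 := by
    rw [norm_psi_sq hz, lt_add_iff_pos_right]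
    positivity
  exact (one_lt_sq_iff₀ (norm_nonneg _)).mp this

theorem norm_psi_eq_one (hz : z ≠ ω) (hz1 : ‖z‖ = 1) : ‖psi ω z‖ = 1 := by
  have : ‖psi ω z‖ ^ 2 = 1 := by rw [norm_psi_sq hz, hz1]; simp
  exact (pow_eq_one_iff_of_nonneg (norm_nonneg _) two_ne_zero).mp this

end

theorem stmt13_general {n : ℕ} (ω : EuclideanSpace ℂ (Fin n))
    (hω1 : ‖ω‖ < 1)
    (z : EuclideanSpace ℂ (Fin n)) (hz : z ≠ ω) :
    (‖z‖ < 1 → 1 < ‖psi ω z‖ ∧ ‖phi ω z‖ < 1) ∧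
    (‖z‖ = 1 → ‖psi ω z‖ = 1 ∧ ‖phi ω z‖ = 1) := by
  refine ⟨fun hz1 => ?_, fun hz1 => ?_⟩
  · have hψ := one_lt_norm_psi hω1 hz hz1
    exact ⟨hψ, by rw [norm_phi]; exact inv_lt_one_of_one_lt₀ hψ⟩
  · have hψ := norm_psi_eq_one hz hz1
    exact ⟨hψ, by rw [norm_phi, hψ, inv_one]⟩

/-- for `z ≠ ω`, if `‖z‖ < 1` then `‖ψ_ω(z)‖ > 1` (so `φ_ω(z)` is
defined) and `‖φ_ω(z)‖ < 1`; if `‖z‖ = 1` then `‖ψ_ω(z)‖ = 1` and `‖φ_ω(z)‖ = 1`. -/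
theorem stmt13 {n : ℕ} (hn : 1 ≤ n) (ω : EuclideanSpace ℂ (Fin n))
    (hω0 : 0 < ‖ω‖) (hω1 : ‖ω‖ < 1)
    (z : EuclideanSpace ℂ (Fin n)) (hz : z ≠ ω) :
    (‖z‖ < 1 → 1 < ‖psi ω z‖ ∧ ‖phi ω z‖ < 1) ∧
    (‖z‖ = 1 → ‖psi ω z‖ = 1 ∧ ‖phi ω z‖ = 1) :=
  stmt13_general ω hω1 z hz
end

section
/- (Cartan) Let n ≥ 1 and let B_n = {z ∈ ℂⁿ : ‖z‖ < 1} be the open unit ball of ℂⁿ for the standard hermitian norm. Let h : B_n → B_n be a bijective holomorphic map whose inverse is also holomorphic, and suppose h(0) = 0. Then h is the restriction to B_n of a unitary linear map of ℂⁿ: there exists a unitary U ∈ U(n) such that h(z) = Uz for all z ∈ B_n. -/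
/-!
By the Schwarz lemma both `h` and its inverse do not increase norms, so `h` preserves the norm on
the ball. On each complex line through the origin, `h` then attains equality in the Schwarz lemma;
since the Hilbert norm is strictly convex, this forces `h` to be linear on that line, hence equal
to its derivative at `0`, which is therefore a linear isometry.
-/

open Metric Set

theorem norm_map_of_norm_map_ball {𝕜 E F : Type*} [NontriviallyNormedField 𝕜]
    [NormedAddCommGroup E] [NormedSpace 𝕜 E] [NormedAddCommGroup F] [NormedSpace 𝕜 F]
    (A : E →ₗ[𝕜] F) {R : ℝ} (hR : 0 < R)
    (hA : ∀ z ∈ ball 0 R, ‖A z‖ = ‖z‖) (v : E) : ‖A v‖ = ‖v‖ := by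
  obtain ⟨c, hc0, hc⟩ := NormedField.exists_norm_lt 𝕜 (div_pos hR (by positivity : 0 < ‖v‖ + 1))
  have hcv : c • v ∈ ball 0 R := by
    rw [mem_ball_zero_iff, norm_smul]
    rw [lt_div_iff₀ (by positivity)] at hc
    nlinarith [norm_nonneg v]
  have := hA _ hcv
  rw [map_smul, norm_smul, norm_smul] at this
  exact mul_left_cancel₀ hc0.ne' this

variable {E F : Type*} [NormedAddCommGroup E] [NormedSpace ℂ E]
  [NormedAddCommGroup F] [NormedSpace ℂ F]

theorem norm_eq_norm_of_leftInvOn_ball {f : E → F} {g : F → E} {R : ℝ}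
    (hf : DifferentiableOn ℂ f (ball 0 R)) (hfm : MapsTo f (ball 0 R) (ball 0 R))
    (hg : DifferentiableOn ℂ g (ball 0 R)) (hgm : MapsTo g (ball 0 R) (ball 0 R))
    (hgf : LeftInvOn g f (ball 0 R)) (hf0 : f 0 = 0) {z : E} (hz : z ∈ ball 0 R) :
    ‖f z‖ = ‖z‖ := by
  have hg0 : g 0 = 0 := by simpa [hf0] using hgf (mem_ball_self (pos_of_mem_ball hz))
  refine le_antisymm (Complex.norm_le_norm_of_mapsTo_ball hf
    (hfm.mono_right ball_subset_closedBall) hf0 (mem_ball_zero_iff.mp hz)) ?_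
  calc ‖z‖ = ‖g (f z)‖ := by rw [hgf hz]
    _ ≤ ‖f z‖ := Complex.norm_le_norm_of_mapsTo_ball hg
        (hgm.mono_right ball_subset_closedBall) hg0 (mem_ball_zero_iff.mp (hfm hz))

theorem eqOn_fderiv_of_norm_eq [StrictConvexSpace ℝ F] {f : E → F} {R : ℝ}
    (hd : DifferentiableOn ℂ f (ball 0 R)) (hnorm : ∀ z ∈ ball 0 R, ‖f z‖ = ‖z‖) :
    EqOn f (fderiv ℂ f 0) (ball 0 R) := by
  intro w hw
  have hR : 0 < R := pos_of_mem_ball hw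
  have hf0 : f 0 = 0 := norm_eq_zero.mp (by simpa using hnorm 0 (mem_ball_self hR))
  rcases eq_or_ne w 0 with rfl | hw0
  · simp [hf0]
  have hw' : 0 < ‖w‖ := norm_pos_iff.mpr hw0
  rw [mem_ball_zero_iff] at hw
  set r := R / ‖w‖
  set φ : ℂ → F := fun c => f (c • w)
  have hline : MapsTo (· • w) (ball (0 : ℂ) r) (ball 0 R) := fun c hc => by
    rw [mem_ball_zero_iff, norm_smul, ← lt_div_iff₀ hw']
    exact mem_ball_zero_iff.mp hc
  have hφd : DifferentiableOn ℂ φ (ball 0 r) :=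
    hd.comp (differentiable_id.smul_const w).differentiableOn hline
  have hφmaps : MapsTo φ (ball 0 r) (closedBall (φ 0) R) := fun c hc => by
    rw [mem_closedBall, dist_eq_norm]
    simpa [φ, hf0, hnorm _ (hline hc)] using (mem_ball_zero_iff.mp (hline hc)).le
  have h1 : (1 : ℂ) ∈ ball 0 r := by
    rw [mem_ball_zero_iff, norm_one, lt_div_iff₀ hw', one_mul]
    exact hw
  have hslope : dslope φ 0 1 = f w := by
    simp [dslope_of_ne _ one_ne_zero, slope_def_module, φ, hf0]
  have haffine := Complex.affine_of_mapsTo_ball_of_norm_dslope_eq_div hφd hφmaps h1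
    (by rw [hslope, hnorm _ (mem_ball_zero_iff.mpr hw), div_div_cancel₀ hR.ne'])
  have hchain : HasDerivAt φ (fderiv ℂ f 0 w) 0 := by
    have hf : HasFDerivAt f (fderiv ℂ f 0) ((0 : ℂ) • w) := by
      simpa using (hd.differentiableAt (ball_mem_nhds 0 hR)).hasFDerivAt
    have := hf.comp_hasDerivAt (0 : ℂ) ((hasDerivAt_id (0 : ℂ)).smul_const w)
    rwa [one_smul] at this
  have hslice_deriv : HasDerivAt φ (f w) 0 := by
    have := ((hasDerivAt_id (0 : ℂ)).smul_const (dslope φ 0 1)).const_add (φ 0)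
    rw [one_smul] at this
    rw [← hslope]
    refine this.congr_of_eventuallyEq ?_
    filter_upwards [ball_mem_nhds 0 (div_pos hR hw')] with c hc
    simpa using haffine hc
  exact hslice_deriv.unique hchain

theorem stmt19_general {n : ℕ}
    (h : EuclideanSpace ℂ (Fin n) → EuclideanSpace ℂ (Fin n))
    (hmaps : Set.MapsTo h (Metric.ball 0 1) (Metric.ball 0 1))
    (hhol : DifferentiableOn ℂ h (Metric.ball 0 1))
    (hbij : ∃ g : EuclideanSpace ℂ (Fin n) → EuclideanSpace ℂ (Fin n),
      Set.MapsTo g (Metric.ball 0 1) (Metric.ball 0 1) ∧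
      DifferentiableOn ℂ g (Metric.ball 0 1) ∧
      (∀ z ∈ Metric.ball (0 : EuclideanSpace ℂ (Fin n)) 1, g (h z) = z) ∧
      (∀ z ∈ Metric.ball (0 : EuclideanSpace ℂ (Fin n)) 1, h (g z) = z))
    (h0 : h 0 = 0) :
    ∃ U : EuclideanSpace ℂ (Fin n) ≃ₗᵢ[ℂ] EuclideanSpace ℂ (Fin n),
      ∀ z ∈ Metric.ball (0 : EuclideanSpace ℂ (Fin n)) 1, h z = U z := by
  obtain ⟨g, hgmaps, hghol, hgh, -⟩ := hbij
  have hnorm : ∀ z ∈ ball 0 1, ‖h z‖ = ‖z‖ := fun z hz =>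
    norm_eq_norm_of_leftInvOn_ball hhol hmaps hghol hgmaps hgh h0 hz
  have hlin := eqOn_fderiv_of_norm_eq hhol hnorm
  have hiso := norm_map_of_norm_map_ball (fderiv ℂ h 0).toLinearMap one_pos
    fun z hz => (congrArg norm (hlin hz)).symm.trans (hnorm z hz)
  exact ⟨LinearIsometry.toLinearIsometryEquiv ⟨_, hiso⟩ rfl, fun z hz => hlin hz⟩

/-- Cartan: a biholomorphic self-map `h` of the open unit ball of `ℂⁿ`
fixing the origin is the restriction of a unitary linear map of `ℂⁿ`. -/
theorem stmt19 {n : ℕ} (hn : 1 ≤ n)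
    (h : EuclideanSpace ℂ (Fin n) → EuclideanSpace ℂ (Fin n))
    (hmaps : Set.MapsTo h (Metric.ball 0 1) (Metric.ball 0 1))
    (hhol : DifferentiableOn ℂ h (Metric.ball 0 1))
    (hbij : ∃ g : EuclideanSpace ℂ (Fin n) → EuclideanSpace ℂ (Fin n),
      Set.MapsTo g (Metric.ball 0 1) (Metric.ball 0 1) ∧
      DifferentiableOn ℂ g (Metric.ball 0 1) ∧
      (∀ z ∈ Metric.ball (0 : EuclideanSpace ℂ (Fin n)) 1, g (h z) = z) ∧
      (∀ z ∈ Metric.ball (0 : EuclideanSpace ℂ (Fin n)) 1, h (g z) = z))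
    (h0 : h 0 = 0) :
    ∃ U : EuclideanSpace ℂ (Fin n) ≃ₗᵢ[ℂ] EuclideanSpace ℂ (Fin n),
      ∀ z ∈ Metric.ball (0 : EuclideanSpace ℂ (Fin n)) 1, h z = U z :=
  stmt19_general h hmaps hhol hbij h0
end
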